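/- If n ≥ 5 and n ≡ 2, 6, 8, 10, 14 or 18 (mod 31), then the largest minimum weight d(n,5) among all binary LCD [n,5] codes satisfies d(n,5) = ⌊16n/31⌋ − 1 or d(n,5) = ⌊16n/31⌋ − 2. -/

import Mathlib

/-- The (Hamming) weight of a vector over `F_2`. -/
def wt {n : ℕ} (x : Fin n → ZMod 2) : ℕ :=
  Finset.card (Finset.univ.filter fun i => x i ≠ 0)

/-- The dual code of a binary code `C`, with respect to the standard inner product. -/
def dualCode {n : ℕ} (C : Submodule (ZMod 2) (Fin n → ZMod 2)) :
    Submodule (ZMod 2) (Fin n → ZMod 2) where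
  carrier := {x | ∀ y ∈ C, ∑ i, x i * y i = 0}
  add_mem' := by
    intro a b ha hb y hy
    simp [Pi.add_apply, add_mul, Finset.sum_add_distrib, ha y hy, hb y hy]
  zero_mem' := by
    intro y hy
    simp
  smul_mem' := by
    intro c a ha y hy
    simp only [Pi.smul_apply, smul_eq_mul, mul_assoc, ← Finset.mul_sum, ha y hy, mul_zero]

/-- A binary code is linear complementary dual (LCD) if it meets its dual trivially. -/
def IsLCD {n : ℕ} (C : Submodule (ZMod 2) (Fin n → ZMod 2)) : Prop :=
  C ⊓ dualCode C = ⊥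

/-- The minimum weight of a binary code: the smallest weight of a nonzero codeword. -/
noncomputable def minWt {n : ℕ} (C : Submodule (ZMod 2) (Fin n → ZMod 2)) : ℕ :=
  sInf {w | ∃ x ∈ C, x ≠ 0 ∧ wt x = w}

/-- `dLCD n k` is the largest minimum weight among all binary LCD `[n,k]` codes. -/
noncomputable def dLCD (n k : ℕ) : ℕ :=
  sSup {d | ∃ C : Submodule (ZMod 2) (Fin n → ZMod 2),
    Module.finrank (ZMod 2) C = k ∧ IsLCD C ∧ minWt C = d}

/-!
Upper bound: by the Griesmer bound `n ≥ ∑_{i<5} ⌈d / 2^i⌉`, proved by passing to the residual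
code of a minimum-weight codeword, no binary `[n, 5]` code in these residue classes has
`d ≥ ⌊16 n / 31⌋`.

Lower bound: the simplex code `[31, 5, 16]` has Gram matrix `0` and all nonzero weights `16`, so
appending `t` copies of it to a generator matrix `B` keeps `B Bᵀ` nonsingular, hence (Massey) the
code LCD, and adds `16 t` to every weight. An explicit LCD `[b, 5, ⌊16 b / 31⌋ - 2]` code with
`b ≡ n (mod 31)` then gives `d(n, 5) ≥ ⌊16 n / 31⌋ - 2`.
-/

open Finset Module Matrix

/-- `griesmerBound k d = ∑_{i<k} ⌈d / 2^i⌉`, using `⌈⌈d / 2^i⌉ / 2⌉ = ⌈d / 2^(i+1)⌉`. -/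
def griesmerBound : ℕ → ℕ → ℕ
  | 0, _ => 0
  | k + 1, d => d + griesmerBound k ((d + 1) / 2)

theorem griesmerBound_mono : ∀ k, Monotone (griesmerBound k)
  | 0, _, _, _ => le_rfl
  | k + 1, _, _, h => Nat.add_le_add h (griesmerBound_mono k (by omega))

theorem card_ne_zero_add_card_add_ne_zero_le {ι : Type*} [Fintype ι] (f g : ι → ZMod 2) :
    #{i | f i ≠ 0} + #{i | f i + g i ≠ 0} ≤ 2 * #{i | g i = 0 ∧ f i ≠ 0} + #{i | g i ≠ 0} := by
  simp only [card_filter, ← sum_add_distrib, mul_sum]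
  refine sum_le_sum fun i _ => ?_
  generalize f i = a
  generalize g i = b
  revert a b
  decide

/-- The Griesmer bound for the binary code `V` whose `i`-th coordinate is the functional `c i`. -/
theorem griesmerBound_le_card {V ι : Type*} [AddCommGroup V] [Module (ZMod 2) V] [Fintype ι]
    (c : ι → Dual (ZMod 2) V) {d : ℕ} (hd : ∀ v ≠ 0, d ≤ #{i | c i v ≠ 0}) :
    griesmerBound (finrank (ZMod 2) V) d ≤ Fintype.card ι := by
  generalize hk : finrank (ZMod 2) V = k
  induction k generalizing V ι d with
  | zero => exact Nat.zero_le _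
  | succ k ih =>
    have : Module.Finite (ZMod 2) V := Module.finite_of_finrank_pos (by omega)
    have : Nontrivial V := Module.nontrivial_of_finrank_pos (R := ZMod 2) (by omega)
    have := Module.finite_of_finite (ZMod 2) (M := V)
    -- the residual code with respect to a codeword `v₀` of minimum weight
    obtain ⟨v₀, hv₀, hmin⟩ := Set.exists_min_image {v : V | v ≠ 0} (fun v => #{i | c i v ≠ 0})
      (Set.toFinite _) (exists_ne 0)
    set ι' := {i // c i v₀ = 0}
    set c' : ι' → Dual (ZMod 2) (V ⧸ ZMod 2 ∙ v₀) := fun i =>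
      (ZMod 2 ∙ v₀).liftQ (c i) ((Submodule.span_singleton_le_iff_mem _ _).2 i.2)
    have hk' : finrank (ZMod 2) (V ⧸ ZMod 2 ∙ v₀) = k := by
      have := Submodule.finrank_quotient_add_finrank (ZMod 2 ∙ v₀)
      rw [finrank_span_singleton hv₀] at this
      omega
    have hres : ∀ w ≠ 0, (#{i | c i v₀ ≠ 0} + 1) / 2 ≤ #{i | c' i w ≠ 0} := by
      intro w hw
      obtain ⟨v, rfl⟩ := Submodule.Quotient.mk_surjective _ w
      have hv : v ∉ ZMod 2 ∙ v₀ := fun h => hw ((Submodule.Quotient.mk_eq_zero _).2 h)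
      have h₁ := hmin v (fun h => hv (h ▸ zero_mem _))
      have h₂ := hmin (v + v₀) fun h => hv (by
        rw [add_eq_zero_iff_eq_neg.1 h]; exact neg_mem (Submodule.mem_span_singleton_self v₀))
      have h₃ := card_ne_zero_add_card_add_ne_zero_le (fun i => c i v) (fun i => c i v₀)
      have h₄ : #{i | c' i (Submodule.Quotient.mk v) ≠ 0} = #{i | c i v₀ = 0 ∧ c i v ≠ 0} := by
        rw [← Fintype.card_subtype, ← Fintype.card_subtype,
          ← Fintype.card_congr (Equiv.subtypeSubtypeEquivSubtypeInter _ _)]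
        rfl
      simp only [map_add] at h₂ h₃
      omega
    have hcard : Fintype.card ι = Fintype.card ι' + #{i | c i v₀ ≠ 0} := by
      rw [Fintype.card_subtype, card_filter_add_card_filter_not, card_univ]
    calc griesmerBound (k + 1) d
        ≤ griesmerBound (k + 1) #{i | c i v₀ ≠ 0} := griesmerBound_mono _ (hd v₀ hv₀)
      _ ≤ #{i | c i v₀ ≠ 0} + Fintype.card ι' := Nat.add_le_add_left (ih c' hres hk') _
      _ = Fintype.card ι := by omega

theorem minWt_le {n : ℕ} {C : Submodule (ZMod 2) (Fin n → ZMod 2)} {x : Fin n → ZMod 2}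
    (hx : x ∈ C) (hx₀ : x ≠ 0) : minWt C ≤ wt x :=
  Nat.sInf_le ⟨x, hx, hx₀, rfl⟩

theorem le_minWt {n : ℕ} {C : Submodule (ZMod 2) (Fin n → ZMod 2)} {d : ℕ} (hC : C ≠ ⊥)
    (h : ∀ x ∈ C, x ≠ 0 → d ≤ wt x) : d ≤ minWt C := by
  obtain ⟨x, hx, hx₀⟩ := Submodule.exists_mem_ne_zero_of_ne_bot hC
  exact le_csInf ⟨_, x, hx, hx₀, rfl⟩ fun _ ⟨y, hy, hy₀, hw⟩ => hw ▸ h y hy hy₀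

theorem griesmerBound_minWt_le {n : ℕ} (C : Submodule (ZMod 2) (Fin n → ZMod 2)) :
    griesmerBound (finrank (ZMod 2) C) (minWt C) ≤ n := by
  simpa using griesmerBound_le_card (fun i => (LinearMap.proj i).comp C.subtype)
    fun v hv => minWt_le v.2 (by simpa using hv)

section GeneratorMatrix

variable {k m n : ℕ}

theorem finrank_range_vecMulLinear (G : Matrix (Fin k) (Fin n) (ZMod 2))
    (hG : (G * Gᵀ).det ≠ 0) : finrank (ZMod 2) (LinearMap.range G.vecMulLinear) = k := by
  rw [LinearMap.finrank_range_of_inj, finrank_fin_fun]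
  refine (injective_iff_map_eq_zero _).2 fun x hx => eq_zero_of_vecMul_eq_zero hG ?_
  rw [← vecMul_vecMul, show x ᵥ* G = 0 from hx, zero_vecMul]

/-- Massey's criterion. -/
theorem isLCD_range_vecMulLinear (G : Matrix (Fin k) (Fin n) (ZMod 2))
    (hG : (G * Gᵀ).det ≠ 0) : IsLCD (LinearMap.range G.vecMulLinear) := by
  rw [IsLCD, eq_bot_iff]
  rintro _ ⟨⟨x, rfl⟩, hdual⟩
  suffices x = 0 by simp [this]
  refine eq_zero_of_vecMul_eq_zero hG ?_
  ext l
  rw [← vecMul_vecMul]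
  have h := hdual _ ⟨Pi.single l 1, rfl⟩
  simp only [vecMulLinear_apply, single_one_vecMul] at h
  simpa [vecMul, dotProduct] using h

def appendCols {R : Type*} (G : Matrix (Fin k) (Fin m) R) (H : Matrix (Fin k) (Fin n) R) :
    Matrix (Fin k) (Fin (m + n)) R :=
  of fun i => Fin.append (G i) (H i)

theorem vecMul_appendCols {R : Type*} [NonUnitalNonAssocSemiring R] (x : Fin k → R)
    (G : Matrix (Fin k) (Fin m) R) (H : Matrix (Fin k) (Fin n) R) :
    x ᵥ* appendCols G H = Fin.append (x ᵥ* G) (x ᵥ* H) := by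
  ext j
  refine Fin.addCases (fun j => ?_) (fun j => ?_) j <;> simp [vecMul, dotProduct, appendCols]

theorem appendCols_mul_transpose {R : Type*} [NonUnitalNonAssocSemiring R]
    (G : Matrix (Fin k) (Fin m) R) (H : Matrix (Fin k) (Fin n) R) :
    appendCols G H * (appendCols G H)ᵀ = G * Gᵀ + H * Hᵀ := by
  ext i l
  simp [mul_apply, appendCols, Fin.sum_univ_add]

theorem wt_append (u : Fin m → ZMod 2) (v : Fin n → ZMod 2) :
    wt (Fin.append u v) = wt u + wt v := by
  simp [wt, card_filter, Fin.sum_univ_add]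

end GeneratorMatrix

/-- The binary `5 × l.length` matrix whose `j`-th column is the binary expansion of `l[j]`, bit `r`
in row `r`. -/
def binaryCols (l : List ℕ) : Matrix (Fin 5) (Fin l.length) (ZMod 2) :=
  of fun r j => if l[j].testBit r then 1 else 0

def simplexMatrix : Matrix (Fin 5) (Fin 31) (ZMod 2) := binaryCols (List.range' 1 31)

theorem simplexMatrix_mul_transpose : simplexMatrix * simplexMatrixᵀ = 0 := by decide

theorem wt_vecMul_simplexMatrix :
    ∀ x : Fin 5 → ZMod 2, x ≠ 0 → wt (x ᵥ* simplexMatrix) = 16 := by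
  decide

theorem exists_simplex_extension {b w : ℕ} (B : Matrix (Fin 5) (Fin b) (ZMod 2))
    (hB : (B * Bᵀ).det ≠ 0) (hw : ∀ x ≠ 0, w ≤ wt (x ᵥ* B)) (t : ℕ) :
    ∃ G : Matrix (Fin 5) (Fin (b + 31 * t)) (ZMod 2),
      (G * Gᵀ).det ≠ 0 ∧ ∀ x ≠ 0, w + 16 * t ≤ wt (x ᵥ* G) := by
  induction t with
  | zero => exact ⟨B, hB, hw⟩
  | succ t ih =>
    obtain ⟨G, hG, hGw⟩ := ih
    rw [show b + 31 * (t + 1) = b + 31 * t + 31 by ring]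
    refine ⟨appendCols G simplexMatrix, ?_, fun x hx => ?_⟩
    · rwa [appendCols_mul_transpose, simplexMatrix_mul_transpose, add_zero]
    · rw [vecMul_appendCols, wt_append, wt_vecMul_simplexMatrix x hx]
      linarith [hGw x hx]

theorem exists_lcd_of_generator {k n d : ℕ} (hk : k ≠ 0) (G : Matrix (Fin k) (Fin n) (ZMod 2))
    (hG : (G * Gᵀ).det ≠ 0) (hd : ∀ x ≠ 0, d ≤ wt (x ᵥ* G)) :
    ∃ C : Submodule (ZMod 2) (Fin n → ZMod 2),
      finrank (ZMod 2) C = k ∧ IsLCD C ∧ d ≤ minWt C := by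
  have hrank := finrank_range_vecMulLinear G hG
  refine ⟨_, hrank, isLCD_range_vecMulLinear G hG, le_minWt ?_ ?_⟩
  · intro hbot
    rw [hbot, finrank_bot] at hrank
    exact hk hrank.symm
  · rintro _ ⟨x, rfl⟩ hx
    exact hd x fun h => hx (by simp [h])

/-- Columns (in the encoding of `binaryCols`) of LCD codes of dimension `5`, of length `b` the
least `b ≥ 5` with `b ≡ r (mod 31)` and minimum weight `⌊16 b / 31⌋ - 2`. -/
def baseColumns : ℕ → List ℕ
  | 2 => [9, 10, 18, 20, 15, 10, 2, 13, 17, 21, 12, 28, 6, 1, 25, 26, 31, 23, 30, 19, 18, 22, 11, 5,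
      16, 29, 30, 9, 1, 15, 7, 27, 14]
  | 6 => [8, 28, 17, 16, 26, 20]
  | 8 => [19, 8, 6, 10, 5, 23, 28, 19]
  | 10 => [20, 12, 2, 12, 3, 31, 28, 8, 13, 22]
  | 14 => [3, 17, 16, 27, 12, 30, 13, 19, 7, 1, 8, 31, 20, 22]
  | 18 => [31, 24, 26, 9, 30, 14, 7, 22, 21, 1, 21, 13, 16, 20, 17, 18, 2, 20]
  | _ => []

theorem baseColumns_spec : ∀ r ∈ [2, 6, 8, 10, 14, 18],
    (baseColumns r).length < 5 + 31 ∧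
    (baseColumns r).length % 31 = r ∧
    (∀ x, x ᵥ* (binaryCols (baseColumns r) * (binaryCols (baseColumns r))ᵀ) = 0 → x = 0) ∧
    ∀ x ≠ 0, 16 * (baseColumns r).length / 31 - 2 ≤ wt (x ᵥ* binaryCols (baseColumns r)) := by
  decide

theorem exists_lcd_dim5 {n : ℕ} (hn : 5 ≤ n)
    (h : n % 31 = 2 ∨ n % 31 = 6 ∨ n % 31 = 8 ∨ n % 31 = 10 ∨ n % 31 = 14 ∨ n % 31 = 18) :
    ∃ C : Submodule (ZMod 2) (Fin n → ZMod 2),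
      finrank (ZMod 2) C = 5 ∧ IsLCD C ∧ 16 * n / 31 - 2 ≤ minWt C := by
  obtain ⟨hlen, hmod, hgram, hw⟩ := baseColumns_spec (n % 31) (by simpa using h)
  generalize baseColumns (n % 31) = l at *
  have hB : (binaryCols l * (binaryCols l)ᵀ).det ≠ 0 := fun h₀ =>
    let ⟨x, hx, hx₀⟩ := exists_vecMul_eq_zero_iff.2 h₀
    hx (hgram x hx₀)
  obtain ⟨t, rfl⟩ : ∃ t, n = l.length + 31 * t := ⟨(n - l.length) / 31, by omega⟩
  obtain ⟨G, hG, hGw⟩ := exists_simplex_extension _ hB hw t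
  exact exists_lcd_of_generator (by norm_num) G hG fun x hx => by
    have := hGw x hx
    omega

theorem minWt_lt_of_finrank_eq_five {n : ℕ}
    (h : n % 31 = 2 ∨ n % 31 = 6 ∨ n % 31 = 8 ∨ n % 31 = 10 ∨ n % 31 = 14 ∨ n % 31 = 18)
    (C : Submodule (ZMod 2) (Fin n → ZMod 2)) (hC : finrank (ZMod 2) C = 5) :
    minWt C < 16 * n / 31 := by
  by_contra! hle
  have hgriesmer := hC ▸ griesmerBound_minWt_le C
  have hmono := griesmerBound_mono 5 hle
  have hlong : n < griesmerBound 5 (16 * n / 31) := by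
    simp only [griesmerBound]
    omega
  omega

theorem lcd_dim5_twoValues' (n : ℕ) (hn : 5 ≤ n)
    (h : n % 31 = 2 ∨ n % 31 = 6 ∨ n % 31 = 8 ∨ n % 31 = 10 ∨ n % 31 = 14 ∨ n % 31 = 18) :
    dLCD n 5 = 16 * n / 31 - 1 ∨ dLCD n 5 = 16 * n / 31 - 2 := by
  set S := {d | ∃ C : Submodule (ZMod 2) (Fin n → ZMod 2),
    Module.finrank (ZMod 2) C = 5 ∧ IsLCD C ∧ minWt C = d}
  have hupper : ∀ d ∈ S, d ≤ 16 * n / 31 - 1 := by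
    rintro _ ⟨C, hC, -, rfl⟩
    have := minWt_lt_of_finrank_eq_five h C hC
    omega
  obtain ⟨C, hC, hCLCD, hCwt⟩ := exists_lcd_dim5 hn h
  have hmem : minWt C ∈ S := ⟨C, hC, hCLCD, rfl⟩
  have h₁ : dLCD n 5 ≤ 16 * n / 31 - 1 := csSup_le ⟨_, hmem⟩ hupper
  have h₂ : minWt C ≤ dLCD n 5 := le_csSup ⟨_, hupper⟩ hmem
  omega
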